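/- Let K be a field, let q, z, y ∈ K with z and y nonzero, and assume 1 − q^{4j} ≠ 0 for all 1 ≤ j ≤ N. Then Σ_μ z^{O(μ)} y^{O(μ')} q^{|μ|}, the finite sum over all strict partitions μ whose parts are all ≤ 2N, equals Σ_{j=0}^{N} [N choose j]_{q⁴} · (−zyq; q⁴)_j · (−zy^{−1}q; q⁴)_{N−j} · (yq)^{2N−2j}. -/

import Mathlib

open scoped BigOperators

/-- A partition: a weakly decreasing sequence of nonnegative integers (0-indexed:
`parts i` is λ_{i+1}) with finitely many nonzero terms. -/
structure IntPartition where
  parts : ℕ → ℕ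
  antitone : Antitone parts
  fin_support : ∃ N, ∀ n, N ≤ n → parts n = 0

namespace IntPartition

/-- Σ_{i≥1} ⌈λ_{2i-1}/2⌉ (odd-indexed rows, 1-based; ceiling). -/
noncomputable def statA (l : IntPartition) : ℕ := ∑ᶠ i : ℕ, (l.parts (2 * i) + 1) / 2
/-- Σ_{i≥1} ⌊λ_{2i-1}/2⌋. -/
noncomputable def statB (l : IntPartition) : ℕ := ∑ᶠ i : ℕ, l.parts (2 * i) / 2
/-- Σ_{i≥1} ⌈λ_{2i}/2⌉. -/
noncomputable def statC (l : IntPartition) : ℕ := ∑ᶠ i : ℕ, (l.parts (2 * i + 1) + 1) / 2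
/-- Σ_{i≥1} ⌊λ_{2i}/2⌋. -/
noncomputable def statD (l : IntPartition) : ℕ := ∑ᶠ i : ℕ, l.parts (2 * i + 1) / 2

/-- ℓ(λ): the number of nonzero parts. -/
noncomputable def length (l : IntPartition) : ℕ := Set.ncard (Function.support l.parts)

/-- |λ|: the sum of all parts. -/
noncomputable def size (l : IntPartition) : ℕ := ∑ᶠ i : ℕ, l.parts i

/-- A partition is strict if its nonzero parts are pairwise distinct. -/
def Strict (l : IntPartition) : Prop := ∀ i, l.parts (i + 1) ≠ 0 → l.parts (i + 1) < l.parts i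

/-- The Andrews–Stanley four-parameter weight ω(λ). -/
noncomputable def weight {R : Type*} [CommRing R] (a b c d : R) (l : IntPartition) : R :=
  a ^ l.statA * b ^ l.statB * c ^ l.statC * d ^ l.statD

/-- O(λ): the number of odd parts. -/
noncomputable def oddParts (l : IntPartition) : ℕ := Set.ncard {i : ℕ | Odd (l.parts i)}

/-- O(λ'): the number of odd parts of the conjugate partition. -/
noncomputable def conjOddParts (l : IntPartition) : ℕ :=
  Set.ncard {j : ℕ | Odd (Set.ncard {i : ℕ | j + 1 ≤ l.parts i})}

end IntPartition

/-- The q-shifted factorial (x;q)_n. -/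
def poch {R : Type*} [CommRing R] (x q : R) (n : ℕ) : R :=
  ∏ k ∈ Finset.range n, (1 - x * q ^ k)

/-- The infinite q-shifted factorial (x;q)_∞ (as an infinite product of reals). -/
noncomputable def pochInf (x q : ℝ) : ℝ := ∏' k : ℕ, (1 - x * q ^ k)

/-- The basic hypergeometric series ₂φ₁(α,β;γ;q,w). -/
noncomputable def phi21 (α β γ q w : ℝ) : ℝ :=
  ∑' n : ℕ, poch α q n * poch β q n / (poch q q n * poch γ q n) * w ^ n

/-- Absolute convergence of the ₂φ₁ series. -/
def phi21Summable (α β γ q w : ℝ) : Prop :=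
  Summable (fun n : ℕ => poch α q n * poch β q n / (poch q q n * poch γ q n) * w ^ n)

/-- The Gaussian binomial coefficient [N choose k]_q. -/
noncomputable def gauss {K : Type*} [Field K] (q : K) (N k : ℕ) : K :=
  poch q q N / (poch q q k * poch q q (N - k))

/-- Ψ_N(a,b,c,d;z): the generating function of strict partitions with parts ≤ N. -/
noncomputable def Psi {R : Type*} [CommRing R] (a b c d z : R) (N : ℕ) : R :=
  ∑ᶠ μ : {μ : IntPartition // μ.Strict ∧ μ.parts 0 ≤ N},
    IntPartition.weight a b c d μ.1 * z ^ μ.1.length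


/-!
Write `L_M(y)` for the sum of `z ^ O(μ) * y ^ O(μ') * q ^ |μ|` over strict partitions `μ` with parts
`≤ M`. Such a partition with parts `≤ M + 1` either has parts `≤ M`, or arises from one by prepending
the part `M + 1`; that adds one cell to each of the columns `1, …, M + 1` of the diagram, which flips
the parity of the first `M` columns and makes column `M + 1` odd, so `O(μ')` becomes `M + 1 - O(μ')`.
Hence `L_{M+1}(y) = L_M(y) + z ^ [M + 1 odd] (y q) ^ (M + 1) L_M(1/y)`, and two steps of this express
`L_{2N+2}(y)` through `L_{2N}(y)` and `L_{2N}(1/y)`. The right-hand side obeys the same recurrence by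
the `q`-Pascal rule, and both sides equal `1` for `N = 0`.
-/

lemma finsum_nat_eq_add_finsum_succ {A : Type*} [AddCommMonoid A] {f : ℕ → A}
    (hf : (Function.support f).Finite) : ∑ᶠ i, f i = f 0 + ∑ᶠ i, f (i + 1) := by
  obtain ⟨n, hn⟩ := hf.bddAbove
  rw [finsum_eq_sum_of_support_subset f (s := Finset.range (n + 2)) fun i hi => ?_,
    finsum_eq_sum_of_support_subset (fun i => f (i + 1)) (s := Finset.range (n + 1)) fun i hi => ?_,
    Finset.sum_range_succ', add_comm]
  all_goals
    have := hn hi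
    simp only [Finset.coe_range, Set.mem_Iio]
    omega

lemma ncard_setOf_eq_ite_add {P : ℕ → Prop} [DecidablePred P] (h : {i | P i}.Finite) :
    {i | P i}.ncard = (if P 0 then 1 else 0) + {i | P (i + 1)}.ncard := by
  rw [← finsum_one, ← finsum_one, finsum_mem_def, finsum_mem_def,
    finsum_nat_eq_add_finsum_succ (h.subset (Set.support_indicator_subset))]
  simp [Set.indicator_apply]

namespace IntPartition

variable {μ : IntPartition} {a M : ℕ}

@[ext] lemma ext {μ ν : IntPartition} (h : ∀ i, μ.parts i = ν.parts i) : μ = ν := by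
  cases μ; cases ν; congr; funext i; exact h i

lemma finite_support (μ : IntPartition) : (Function.support μ.parts).Finite := by
  obtain ⟨N, hN⟩ := μ.fin_support
  exact (Set.finite_Iio N).subset fun i hi => not_le.mp fun h => hi (hN i h)

def empty : IntPartition := ⟨fun _ => 0, antitone_const, 0, fun _ _ => rfl⟩

-- `max` makes `cons` total; it prepends the part `a` itself whenever `μ.parts 0 ≤ a`.
def cons (a : ℕ) (μ : IntPartition) : IntPartition where
  parts
    | 0 => max a (μ.parts 0)
    | i + 1 => μ.parts i
  antitone := antitone_nat_of_succ_le fun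
    | 0 => le_max_right _ _
    | i + 1 => μ.antitone i.le_succ
  fin_support := by
    obtain ⟨N, hN⟩ := μ.fin_support
    exact ⟨N + 1, fun
      | 0, h => by omega
      | i + 1, h => hN i (by omega)⟩

def tail (μ : IntPartition) : IntPartition where
  parts i := μ.parts (i + 1)
  antitone _ _ h := μ.antitone (Nat.succ_le_succ h)
  fin_support := by
    obtain ⟨N, hN⟩ := μ.fin_support
    exact ⟨N, fun i h => hN _ (by omega)⟩

lemma cons_parts_zero (h : μ.parts 0 ≤ a) : (cons a μ).parts 0 = a := max_eq_left h

lemma cons_parts_succ (i : ℕ) : (cons a μ).parts (i + 1) = μ.parts i := rfl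

lemma tail_cons (a : ℕ) (μ : IntPartition) : tail (cons a μ) = μ := rfl

lemma cons_injective (a : ℕ) : Function.Injective (cons a) := fun μ ν h => by
  rw [← tail_cons a μ, h, tail_cons]

lemma cons_tail (μ : IntPartition) : cons (μ.parts 0) μ.tail = μ := by
  ext i
  cases i with
  | zero => exact max_eq_left (μ.antitone (Nat.zero_le 1))
  | succ i => rfl

lemma Strict.cons (hs : μ.Strict) (h : μ.parts 0 < a) : (cons a μ).Strict
  | 0, _ => by rw [cons_parts_succ, cons_parts_zero h.le]; exact h
  | i + 1, hi => hs i hi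

lemma Strict.tail (hs : μ.Strict) : μ.tail.Strict := fun i => hs (i + 1)

lemma Strict.tail_parts_zero_le (hs : μ.Strict) (h : μ.parts 0 = M + 1) : μ.tail.parts 0 ≤ M := by
  by_cases h1 : μ.parts 1 = 0
  · exact h1.trans_le (Nat.zero_le M)
  · have h01 := hs 0 h1
    rw [h] at h01
    exact Nat.lt_succ_iff.mp h01

lemma size_cons (h : μ.parts 0 ≤ a) : (cons a μ).size = a + μ.size := by
  rw [size, finsum_nat_eq_add_finsum_succ (cons a μ).finite_support, cons_parts_zero h]
  rfl

lemma oddParts_cons (h : μ.parts 0 ≤ a) :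
    (cons a μ).oddParts = (if Odd a then 1 else 0) + μ.oddParts := by
  rw [oddParts, ncard_setOf_eq_ite_add ((cons a μ).finite_support.subset fun i hi h0 => ?_),
    cons_parts_zero h]
  · rfl
  · simp [h0] at hi

/-- `μ.conjPart j` is the part `μ'_{j+1}` of the conjugate partition. -/
noncomputable def conjPart (μ : IntPartition) (j : ℕ) : ℕ := {i | j + 1 ≤ μ.parts i}.ncard

lemma conjOddParts_eq_ncard : μ.conjOddParts = {j | Odd (μ.conjPart j)}.ncard := rfl

lemma conjPart_cons (h : μ.parts 0 ≤ a) (j : ℕ) :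
    (cons a μ).conjPart j = (if j + 1 ≤ a then 1 else 0) + μ.conjPart j := by
  rw [conjPart, ncard_setOf_eq_ite_add ((cons a μ).finite_support.subset fun i hi h0 => ?_),
    cons_parts_zero h]
  · rfl
  · simp [h0] at hi

lemma conjPart_eq_zero (h : μ.parts 0 ≤ M) {j : ℕ} (hj : M ≤ j) : μ.conjPart j = 0 := by
  have hempty : {i | j + 1 ≤ μ.parts i} = ∅ := Set.eq_empty_of_forall_notMem fun i hi => by
    have := μ.antitone (Nat.zero_le i)
    simp only [Set.mem_ofPred_eq] at hi
    omega
  rw [conjPart, hempty, Set.ncard_empty]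

lemma setOf_odd_conjPart_subset (h : μ.parts 0 ≤ M) : {j | Odd (μ.conjPart j)} ⊆ Set.Iio M :=
  fun _ hj => not_le.mp fun hM => Nat.not_odd_zero (conjPart_eq_zero h hM ▸ hj)

lemma conjOddParts_le (h : μ.parts 0 ≤ M) : μ.conjOddParts ≤ M :=
  (Set.ncard_le_ncard (setOf_odd_conjPart_subset h)).trans_eq (Set.ncard_Iio_nat M)

lemma conjOddParts_cons (h : μ.parts 0 ≤ M) :
    (cons (M + 1) μ).conjOddParts = M + 1 - μ.conjOddParts := by
  have hcols : {j | Odd ((cons (M + 1) μ).conjPart j)}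
      = Set.Iio (M + 1) \ {j | Odd (μ.conjPart j)} := by
    ext j
    simp only [Set.mem_ofPred_eq, Set.mem_sdiff, Set.mem_Iio, conjPart_cons (h.trans M.le_succ)]
    by_cases hj : j < M + 1
    · simp [hj, Nat.succ_le_of_lt hj, add_comm 1, Nat.odd_add_one]
    · simp [hj, show ¬ j + 1 ≤ M + 1 by omega, conjPart_eq_zero h (show M ≤ j by omega)]
  have hsub := setOf_odd_conjPart_subset h
  rw [conjOddParts_eq_ncard, hcols,
    Set.ncard_sdiff (hsub.trans (Set.Iio_subset_Iio M.le_succ)) ((Set.finite_Iio M).subset hsub),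
    Set.ncard_Iio_nat, conjOddParts_eq_ncard]

def strictPartsLE (M : ℕ) : Set IntPartition := {μ | μ.Strict ∧ μ.parts 0 ≤ M}

lemma strictPartsLE_zero : strictPartsLE 0 = {empty} := by
  ext μ
  constructor
  · rintro ⟨-, h⟩
    ext i
    exact Nat.le_zero.mp ((μ.antitone (Nat.zero_le i)).trans h)
  · rintro rfl
    exact ⟨fun _ h => absurd rfl h, le_rfl⟩

lemma strictPartsLE_succ :
    strictPartsLE (M + 1) = strictPartsLE M ∪ cons (M + 1) '' strictPartsLE M := by
  ext μ
  constructor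
  · rintro ⟨hs, h⟩
    rcases h.lt_or_eq with h | h
    · exact Or.inl ⟨hs, Nat.lt_succ_iff.mp h⟩
    · refine Or.inr ⟨μ.tail, ⟨hs.tail, hs.tail_parts_zero_le h⟩, ?_⟩
      rw [← h]
      exact cons_tail μ
  · rintro (⟨hs, h⟩ | ⟨ν, ⟨hs, h⟩, rfl⟩)
    · exact ⟨hs, h.trans M.le_succ⟩
    · exact ⟨hs.cons (Nat.lt_succ_of_le h), (cons_parts_zero (h.trans M.le_succ)).le⟩

lemma disjoint_strictPartsLE_image_cons :
    Disjoint (strictPartsLE M) (cons (M + 1) '' strictPartsLE M) := by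
  rw [Set.disjoint_left]
  rintro μ ⟨-, h⟩ ⟨ν, ⟨-, hν⟩, rfl⟩
  rw [cons_parts_zero (hν.trans M.le_succ)] at h
  omega

lemma finite_strictPartsLE (M : ℕ) : (strictPartsLE M).Finite := by
  induction M with
  | zero => rw [strictPartsLE_zero]; exact Set.finite_singleton _
  | succ M ih => rw [strictPartsLE_succ]; exact ih.union (ih.image _)

end IntPartition

open IntPartition

section GeneratingFunction

variable {K : Type*} [Field K] {z y q : K} {M N : ℕ}

noncomputable def oddWeight (z y q : K) (μ : IntPartition) : K :=
  z ^ μ.oddParts * y ^ μ.conjOddParts * q ^ μ.size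

lemma oddWeight_cons (hy : y ≠ 0) {μ : IntPartition} (h : μ.parts 0 ≤ M) :
    oddWeight z y q (cons (M + 1) μ)
      = z ^ (if Odd (M + 1) then 1 else 0) * y ^ (M + 1) * q ^ (M + 1) * oddWeight z y⁻¹ q μ := by
  have h' : μ.parts 0 ≤ M + 1 := h.trans M.le_succ
  rw [oddWeight, oddWeight, oddParts_cons h', conjOddParts_cons h, size_cons h', pow_add, pow_add,
    pow_sub₀ y hy (conjOddParts_le h'), inv_pow]
  ring

noncomputable def strictGF (z y q : K) (M : ℕ) : K := ∑ᶠ μ ∈ strictPartsLE M, oddWeight z y q μ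

lemma strictGF_zero : strictGF z y q 0 = 1 := by
  simp [strictGF, strictPartsLE_zero, oddWeight, oddParts, conjOddParts, size, empty]

lemma strictGF_succ (hy : y ≠ 0) :
    strictGF z y q (M + 1) = strictGF z y q M
      + z ^ (if Odd (M + 1) then 1 else 0) * y ^ (M + 1) * q ^ (M + 1) * strictGF z y⁻¹ q M := by
  have hfin := finite_strictPartsLE M
  rw [strictGF, strictPartsLE_succ, finsum_mem_union disjoint_strictPartsLE_image_cons hfin
      (hfin.image _), finsum_mem_image (cons_injective _).injOn,
    finsum_mem_congr rfl fun μ hμ => oddWeight_cons hy hμ.2, ← mul_finsum_mem]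
  rfl

lemma strictGF_two_mul_add_two (hy : y ≠ 0) :
    strictGF z y q (2 * N + 2)
      = (1 + z * y * q ^ (4 * N + 3)) * strictGF z y q (2 * N)
        + (z * y ^ (2 * N + 1) * q ^ (2 * N + 1) + y ^ (2 * N + 2) * q ^ (2 * N + 2))
          * strictGF z y⁻¹ q (2 * N) := by
  have hodd : Odd (2 * N + 1) := odd_two_mul_add_one N
  have heven : ¬ Odd (2 * N + 1 + 1) := by simp [Nat.odd_add_one, hodd]
  rw [show 2 * N + 2 = 2 * N + 1 + 1 from rfl, strictGF_succ hy, if_neg heven, strictGF_succ hy,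
    strictGF_succ (inv_ne_zero hy), if_pos hodd, inv_inv, inv_pow]
  field_simp
  ring

end GeneratingFunction

section QBinomial

@[simp] lemma poch_zero {R : Type*} [CommRing R] (x q : R) : poch x q 0 = 1 :=
  Finset.prod_range_zero _

lemma poch_succ {R : Type*} [CommRing R] (x q : R) (n : ℕ) :
    poch x q (n + 1) = poch x q n * (1 - x * q ^ n) :=
  Finset.prod_range_succ _ _

lemma poch_ne_zero_of_le {R : Type*} [CommRing R] {x q : R} {m n : ℕ} (h : poch x q m ≠ 0)
    (hnm : n ≤ m) : poch x q n ≠ 0 := by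
  induction m, hnm using Nat.le_induction with
  | base => exact h
  | succ m _ ih => exact ih (left_ne_zero_of_mul (poch_succ x q m ▸ h))

variable {K : Type*} [Field K] {q : K} {N j : ℕ}

lemma poch_self_ne_zero (h : ∀ j, 1 ≤ j → j ≤ N → (1 : K) - q ^ j ≠ 0) : poch q q N ≠ 0 :=
  Finset.prod_ne_zero_iff.mpr fun k hk => by
    rw [← pow_succ']
    exact h (k + 1) k.succ_pos (Finset.mem_range.mp hk)

lemma gauss_zero_right (h : poch q q N ≠ 0) : gauss q N 0 = 1 := by
  simp [gauss, h]

lemma gauss_self (h : poch q q N ≠ 0) : gauss q N N = 1 := by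
  simp [gauss, h]

lemma gauss_symm (hj : j ≤ N) : gauss q N (N - j) = gauss q N j := by
  rw [gauss, gauss, Nat.sub_sub_self hj, mul_comm]

lemma gauss_succ_succ (h : poch q q N ≠ 0) (hj : j < N) :
    gauss q (N + 1) (j + 1) = gauss q N j + q ^ (j + 1) * gauss q N (j + 1) := by
  obtain ⟨k, rfl⟩ : ∃ k, N = j + k + 1 := ⟨N - j - 1, by omega⟩
  have hj := poch_ne_zero_of_le h (show j + 1 ≤ j + k + 1 by omega)
  have hk := poch_ne_zero_of_le h (show k + 1 ≤ j + k + 1 by omega)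
  rw [poch_succ] at hj hk
  rw [gauss, gauss, gauss, show j + k + 1 + 1 - (j + 1) = k + 1 by omega,
    show j + k + 1 - j = k + 1 by omega, show j + k + 1 - (j + 1) = k by omega,
    poch_succ q q (j + k + 1), poch_succ q q j, poch_succ q q k]
  field_simp [left_ne_zero_of_mul hj, right_ne_zero_of_mul hj, left_ne_zero_of_mul hk,
    right_ne_zero_of_mul hk]
  ring

lemma sum_range_gauss_succ (h : poch q q (N + 1) ≠ 0) (F : ℕ → ℕ → K) :
    ∑ j ∈ Finset.range (N + 1 + 1), gauss q (N + 1) j * F j (N + 1 - j)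
      = ∑ j ∈ Finset.range (N + 1), gauss q N j * (F (j + 1) (N - j) + q ^ j * F j (N + 1 - j)) := by
  have hN := poch_ne_zero_of_le h N.le_succ
  have hpascal : ∀ j ∈ Finset.range N, gauss q (N + 1) (j + 1) * F (j + 1) (N + 1 - (j + 1))
      = gauss q N j * F (j + 1) (N - j)
        + gauss q N (j + 1) * (q ^ (j + 1) * F (j + 1) (N + 1 - (j + 1))) := fun j hj => by
    rw [gauss_succ_succ hN (Finset.mem_range.mp hj), Nat.add_sub_add_right]
    ring
  simp only [mul_add, Finset.sum_add_distrib]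
  rw [Finset.sum_range_succ', Finset.sum_range_succ, Finset.sum_congr rfl hpascal,
    Finset.sum_add_distrib, Finset.sum_range_succ _ N, Finset.sum_range_succ' _ N,
    gauss_self h, gauss_self hN, gauss_zero_right h, gauss_zero_right hN]
  simp only [Nat.sub_self, Nat.sub_zero, pow_zero, one_mul]
  ring

end QBinomial

section AndrewsSum

variable {K : Type*} [Field K] {z y q : K} {N : ℕ}

noncomputable def andrewsSum (z y q : K) (N : ℕ) : K :=
  ∑ j ∈ Finset.range (N + 1),
    gauss (q ^ 4) N j * poch (-(z * y * q)) (q ^ 4) j *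
      poch (-(z * y⁻¹ * q)) (q ^ 4) (N - j) * (y * q) ^ (2 * N - 2 * j)

lemma andrewsSum_inv (z y q : K) (N : ℕ) :
    andrewsSum z y⁻¹ q N = ∑ j ∈ Finset.range (N + 1),
      gauss (q ^ 4) N j * poch (-(z * y * q)) (q ^ 4) j *
        poch (-(z * y⁻¹ * q)) (q ^ 4) (N - j) * (y⁻¹ * q) ^ (2 * j) := by
  rw [andrewsSum, inv_inv, ← Finset.sum_range_reflect]
  refine Finset.sum_congr rfl fun j hj => ?_
  have hj : j ≤ N := Nat.lt_succ_iff.mp (Finset.mem_range.mp hj)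
  rw [Nat.add_sub_cancel, gauss_symm hj, Nat.sub_sub_self hj,
    show 2 * N - 2 * (N - j) = 2 * j by omega]
  ring

lemma andrewsSum_succ (hq : poch (q ^ 4) (q ^ 4) (N + 1) ≠ 0) (hy : y ≠ 0) :
    andrewsSum z y q (N + 1)
      = (1 + z * y * q ^ (4 * N + 3)) * andrewsSum z y q N
        + (z * y ^ (2 * N + 1) * q ^ (2 * N + 1) + y ^ (2 * N + 2) * q ^ (2 * N + 2))
          * andrewsSum z y⁻¹ q N := by
  set F : ℕ → ℕ → K := fun i k =>
    poch (-(z * y * q)) (q ^ 4) i * poch (-(z * y⁻¹ * q)) (q ^ 4) k * (y * q) ^ (2 * k)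
  have hF : andrewsSum z y q (N + 1)
      = ∑ j ∈ Finset.range (N + 1 + 1), gauss (q ^ 4) (N + 1) j * F j (N + 1 - j) :=
    Finset.sum_congr rfl fun j _ => by
      rw [show 2 * (N + 1) - 2 * j = 2 * (N + 1 - j) by omega]
      ring
  rw [hF, sum_range_gauss_succ hq, andrewsSum_inv, andrewsSum, Finset.mul_sum, Finset.mul_sum,
    ← Finset.sum_add_distrib]
  refine Finset.sum_congr rfl fun j hj => ?_
  obtain ⟨k, rfl⟩ : ∃ k, N = j + k := ⟨N - j, by have := Finset.mem_range.mp hj; omega⟩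
  simp only [F]
  rw [show j + k + 1 - j = k + 1 by omega, Nat.add_sub_cancel_left,
    show 2 * (j + k) - 2 * j = 2 * k by omega, poch_succ _ _ j, poch_succ _ _ k]
  simp only [mul_pow, inv_pow]
  field_simp
  ring

lemma strictGF_two_mul_eq_andrewsSum (hq : poch (q ^ 4) (q ^ 4) N ≠ 0) (hy : y ≠ 0) :
    strictGF z y q (2 * N) = andrewsSum z y q N := by
  induction N generalizing y with
  | zero => simp [strictGF_zero, andrewsSum, gauss]
  | succ N ih =>
    have hq' := poch_ne_zero_of_le hq N.le_succ
    rw [show 2 * (N + 1) = 2 * N + 2 by ring, strictGF_two_mul_add_two hy, andrewsSum_succ hq hy,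
      ih hq' hy, ih hq' (inv_ne_zero hy)]

end AndrewsSum

theorem strict_andrews_even_general {K : Type*} [Field K] (q z y : K) (N : ℕ)
    (hy : y ≠ 0) (h : ∀ j, 1 ≤ j → j ≤ N → (1 : K) - q ^ (4 * j) ≠ 0) :
    (∑ᶠ μ : {μ : IntPartition // μ.Strict ∧ μ.parts 0 ≤ 2 * N},
        z ^ μ.1.oddParts * y ^ μ.1.conjOddParts * q ^ μ.1.size) =
      ∑ j ∈ Finset.range (N + 1),
        gauss (q ^ 4) N j * poch (-(z * y * q)) (q ^ 4) j *
          poch (-(z * y⁻¹ * q)) (q ^ 4) (N - j) * (y * q) ^ (2 * N - 2 * j) := by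
  have hq : poch (q ^ 4) (q ^ 4) N ≠ 0 := poch_self_ne_zero fun j h1 h2 => by
    rw [← pow_mul]
    exact h j h1 h2
  exact (finsum_set_coe_eq_finsum_mem _).trans (strictGF_two_mul_eq_andrewsSum hq hy)

theorem strict_andrews_even {K : Type*} [Field K] (q z y : K) (N : ℕ)
    (hz : z ≠ 0) (hy : y ≠ 0) (h : ∀ j, 1 ≤ j → j ≤ N → (1 : K) - q ^ (4 * j) ≠ 0) :
    (∑ᶠ μ : {μ : IntPartition // μ.Strict ∧ μ.parts 0 ≤ 2 * N},
        z ^ μ.1.oddParts * y ^ μ.1.conjOddParts * q ^ μ.1.size) =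
      ∑ j ∈ Finset.range (N + 1),
        gauss (q ^ 4) N j * poch (-(z * y * q)) (q ^ 4) j *
          poch (-(z * y⁻¹ * q)) (q ^ 4) (N - j) * (y * q) ^ (2 * N - 2 * j) :=
  strict_andrews_even_general q z y N hy h
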